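/- Let w ∈ ℝⁿ maximize the quadratic form wᵀHw over the polytope P = {w ∈ [0,1/k]ⁿ : ∑_i w_i = 1}, where H is symmetric with H_{ii} + H_{jj} ≥ 2H_{ij} for all i ≠ j, and among maximizers choose w with the maximal number of entries equal to 1/k. Then w has at most one entry strictly in (0, 1/k); consequently (since k·(1/k) = 1) w has exactly k entries equal to 1/k and the rest zero. -/

import Mathlib

open scoped Classical
open Matrix Finset

/-!
Along a direction `e i - e j` the quadratic form `x ↦ xᵀ H x` restricts to a parabola with
leading coefficient `H i i + H j j - H i j - H j i ≥ 0`, hence to a convex function of one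
variable. If a maximizer `v` over the capped simplex has two entries `i, j` strictly between `0`
and the cap, it is an interior point of the segment obtained by moving mass between `i` and `j`, so
convexity forces the endpoint where `v i` reaches the cap or `v j` reaches `0` to be a maximizer
too, with fewer fractional entries. Iterating leaves a maximizer with at most one fractional entry;
as the entries sum to `1 = k * (1 / k)`, it has none, and exactly `k` entries equal to `1 / k`.
Maximality of the count for `w` then gives `w` at least, hence exactly, `k` such entries, and the
sum forces the remaining ones to vanish.
-/

noncomputable section

def cappedSimplex (ι : Type*) [Fintype ι] (u : ℝ) : Set (ι → ℝ) :=
  {w | (∀ i, w i ∈ Set.Icc 0 u) ∧ ∑ i, w i = 1}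

variable {ι : Type*}

def fractionalEntries [Fintype ι] (u : ℝ) (w : ι → ℝ) : Finset ι :=
  {i | w i ∈ Set.Ioo 0 u}

section CappedSimplex

variable [Fintype ι] {u : ℝ} {w : ι → ℝ}

theorem mem_fractionalEntries {i : ι} : i ∈ fractionalEntries u w ↔ w i ∈ Set.Ioo 0 u := by
  simp [fractionalEntries]

theorem pos_of_mem_cappedSimplex (hw : w ∈ cappedSimplex ι u) : 0 < u := by
  by_contra! hu
  have hzero : ∑ i, w i = 0 :=
    sum_eq_zero fun i _ => le_antisymm ((hw.1 i).2.trans hu) (hw.1 i).1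
  linarith [hw.2]

theorem sum_eq_card_mul_add_sum_fractionalEntries (hw : ∀ i, w i ∈ Set.Icc 0 u) :
    ∑ i, w i = #{i | w i = u} * u + ∑ i ∈ fractionalEntries u w, w i := by
  have hsplit : ∀ i, w i = (if w i = u then u else 0) + (if w i ∈ Set.Ioo 0 u then w i else 0) := by
    intro i
    obtain ⟨h0, hu⟩ := hw i
    by_cases hwu : w i = u
    · simp [hwu]
    · rcases h0.eq_or_lt with h | h
      · simp [← h]
      · simp [hwu, h, lt_of_le_of_ne hu hwu]
  rw [sum_congr rfl fun i _ => hsplit i, sum_add_distrib, ← sum_filter, ← sum_filter, sum_const,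
    nsmul_eq_mul]
  rfl

theorem eq_or_eq_zero_of_fractionalEntries_eq_empty (hw : ∀ i, w i ∈ Set.Icc 0 u)
    (h : fractionalEntries u w = ∅) (i : ι) : w i = u ∨ w i = 0 := by
  have hi : i ∉ fractionalEntries u w := h ▸ notMem_empty i
  rw [mem_fractionalEntries] at hi
  obtain ⟨h0, hu⟩ := hw i
  by_contra! hne
  exact hi ⟨lt_of_le_of_ne h0 hne.2.symm, lt_of_le_of_ne hu hne.1⟩

end CappedSimplex

section Cap

variable [Fintype ι] {k : ℕ} {w : ι → ℝ}

theorem card_fractionalEntries_ne_one (hw : w ∈ cappedSimplex ι (1 / k)) :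
    #(fractionalEntries (1 / k) w) ≠ 1 := by
  intro h
  obtain ⟨i, hi⟩ := card_eq_one.1 h
  obtain ⟨hi0, hik⟩ := mem_fractionalEntries.1 (hi ▸ mem_singleton_self i)
  have hk : (0 : ℝ) < k := one_div_pos.1 (pos_of_mem_cappedSimplex hw)
  have hsum := sum_eq_card_mul_add_sum_fractionalEntries hw.1
  rw [hw.2, hi, sum_singleton] at hsum
  set m := #{i | w i = 1 / k}
  have hki : (k : ℝ) = m + k * w i := by field_simp at hsum; linarith
  have hki1 : (k : ℝ) * w i < 1 := by rwa [lt_div_iff₀' hk] at hik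
  have hlt : m < k := by exact_mod_cast (by nlinarith : (m : ℝ) < k)
  have hgt : k < m + 1 := by exact_mod_cast (by linarith : (k : ℝ) < m + 1)
  omega

theorem card_eq_of_fractionalEntries_eq_empty (hw : w ∈ cappedSimplex ι (1 / k))
    (h : fractionalEntries (1 / k) w = ∅) : #{i | w i = 1 / k} = k := by
  have hsum := sum_eq_card_mul_add_sum_fractionalEntries hw.1
  rw [hw.2, h, sum_empty, add_zero] at hsum
  have hk : (k : ℝ) ≠ 0 := (one_div_pos.1 (pos_of_mem_cappedSimplex hw)).ne'
  set m := #{i | w i = 1 / k}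
  have hmk : (m : ℝ) = k := by rwa [mul_one_div, eq_comm, div_eq_one_iff_eq hk] at hsum
  exact_mod_cast hmk

theorem fractionalEntries_eq_empty_of_le_card (hw : w ∈ cappedSimplex ι (1 / k))
    (hm : k ≤ #{i | w i = 1 / k}) : fractionalEntries (1 / k) w = ∅ := by
  have hsum := sum_eq_card_mul_add_sum_fractionalEntries hw.1
  have hk : (0 : ℝ) < k := one_div_pos.1 (pos_of_mem_cappedSimplex hw)
  have hm1 : 1 ≤ (#{i | w i = 1 / k} : ℝ) * (1 / k) := by
    rw [mul_one_div, le_div_iff₀ hk, one_mul]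
    exact_mod_cast hm
  by_contra hne
  have hpos : 0 < ∑ i ∈ fractionalEntries (1 / k) w, w i :=
    sum_pos (fun i hi => (mem_fractionalEntries.1 hi).1) (nonempty_iff_ne_empty.2 hne)
  linarith [hw.2]

end Cap

section Exchange

variable {i j : ι}

theorem convexOn_quadratic {a b c : ℝ} (hc : 0 ≤ c) :
    ConvexOn ℝ Set.univ fun t : ℝ => a + b * t + c * t ^ 2 := by
  have hlin : ConvexOn ℝ Set.univ fun t : ℝ => b * t :=
    (LinearMap.mulLeft ℝ b).convexOn convex_univ
  have heq : (fun t : ℝ => a + b * t + c * t ^ 2) = fun t => b * t + c • t ^ 2 + a := by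
    funext t
    rw [smul_eq_mul]
    ring
  rw [heq]
  exact (hlin.add ((even_two.convexOn_pow).smul hc)).add_const a

theorem add_smul_single_sub_single_apply (v : ι → ℝ) (hij : i ≠ j) (t : ℝ) (l : ι) :
    (v + t • (Pi.single i 1 - Pi.single j 1) : ι → ℝ) l =
      if l = i then v i + t else if l = j then v j - t else v l := by
  by_cases hi : l = i
  · subst hi; simp [hij]
  · by_cases hj : l = j
    · subst hj; simp [hi, sub_eq_add_neg]
    · simp [hi, hj]

variable [Fintype ι]

theorem dotProduct_mulVec_add_smul (H : Matrix ι ι ℝ) (v d : ι → ℝ) (t : ℝ) :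
    (v + t • d) ⬝ᵥ H *ᵥ (v + t • d) =
      v ⬝ᵥ H *ᵥ v + (d ⬝ᵥ H *ᵥ v + v ⬝ᵥ H *ᵥ d) * t + d ⬝ᵥ H *ᵥ d * t ^ 2 := by
  simp only [mulVec_add, mulVec_smul, dotProduct_add, add_dotProduct, dotProduct_smul,
    smul_dotProduct, smul_eq_mul]
  ring

theorem single_sub_single_dotProduct_mulVec (H : Matrix ι ι ℝ) :
    (Pi.single i 1 - Pi.single j 1 : ι → ℝ) ⬝ᵥ H *ᵥ (Pi.single i 1 - Pi.single j 1) =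
      H i i + H j j - H i j - H j i := by
  simp only [mulVec_sub, mulVec_single_one, sub_dotProduct, single_dotProduct, one_mul,
    Pi.sub_apply, col_apply]
  ring

variable {H : Matrix ι ι ℝ}

theorem convexOn_dotProduct_mulVec_add_smul {v d : ι → ℝ} (hd : 0 ≤ d ⬝ᵥ H *ᵥ d) :
    ConvexOn ℝ Set.univ fun t : ℝ => (v + t • d) ⬝ᵥ H *ᵥ (v + t • d) := by
  simpa only [dotProduct_mulVec_add_smul] using convexOn_quadratic hd

variable {u : ℝ} {v : ι → ℝ}

theorem add_smul_single_sub_single_mem_cappedSimplex (hv : v ∈ cappedSimplex ι u) (hij : i ≠ j)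
    {t : ℝ} (hi : v i + t ∈ Set.Icc 0 u) (hj : v j - t ∈ Set.Icc 0 u) :
    v + t • (Pi.single i 1 - Pi.single j 1) ∈ cappedSimplex ι u := by
  refine ⟨fun l => ?_, ?_⟩
  · rw [add_smul_single_sub_single_apply v hij]
    split_ifs
    exacts [hi, hj, hv.1 l]
  · simp [sum_add_distrib, ← mul_sum, hv.2]

theorem fractionalEntries_add_smul_single_sub_single_subset (hij : i ≠ j)
    (hi : i ∈ fractionalEntries u v) (hj : j ∈ fractionalEntries u v) (t : ℝ) :
    fractionalEntries u (v + t • (Pi.single i 1 - Pi.single j 1)) ⊆ fractionalEntries u v := by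
  intro l hl
  by_cases hli : l = i
  · exact hli ▸ hi
  by_cases hlj : l = j
  · exact hlj ▸ hj
  rwa [mem_fractionalEntries, add_smul_single_sub_single_apply v hij, if_neg hli, if_neg hlj,
    ← mem_fractionalEntries] at hl

theorem exists_fractionalEntries_ssubset
    (hconv : ∀ i j : ι, i ≠ j → 2 * H i j ≤ H i i + H j j) (hv : v ∈ cappedSimplex ι u)
    (hmax : IsMaxOn (fun x => x ⬝ᵥ H *ᵥ x) (cappedSimplex ι u) v) (hij : i ≠ j)
    (hi : i ∈ fractionalEntries u v) (hj : j ∈ fractionalEntries u v) :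
    ∃ v' ∈ cappedSimplex ι u, v' ⬝ᵥ H *ᵥ v' = v ⬝ᵥ H *ᵥ v ∧
      fractionalEntries u v' ⊂ fractionalEntries u v := by
  obtain ⟨hi0, hiu⟩ := mem_fractionalEntries.1 hi
  obtain ⟨hj0, hju⟩ := mem_fractionalEntries.1 hj
  set d : ι → ℝ := Pi.single i 1 - Pi.single j 1
  set f : ℝ → ℝ := fun t => (v + t • d) ⬝ᵥ H *ᵥ (v + t • d)
  set a := min (u - v i) (v j)
  set c := min (v i) (u - v j)
  have ha : 0 < a := lt_min (by linarith) hj0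
  have hc : 0 < c := lt_min hi0 (by linarith)
  have hmem : ∀ t, -c ≤ t → t ≤ a → v + t • d ∈ cappedSimplex ι u := fun t hct hta =>
    add_smul_single_sub_single_mem_cappedSimplex hv hij
      ⟨by linarith [min_le_left (v i) (u - v j)], by linarith [min_le_left (u - v i) (v j)]⟩
      ⟨by linarith [min_le_right (u - v i) (v j)], by linarith [min_le_right (v i) (u - v j)]⟩
  have hle : ∀ t, -c ≤ t → t ≤ a → f t ≤ f 0 := fun t hct hta => by
    simpa [f] using isMaxOn_iff.1 hmax _ (hmem t hct hta)
  have hf : ConvexOn ℝ Set.univ f := convexOn_dotProduct_mulVec_add_smul <| by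
    rw [single_sub_single_dotProduct_mulVec]
    linarith [hconv i j hij, hconv j i hij.symm]
  have hfa : f a = f 0 := le_antisymm (hle a (by linarith) le_rfl) <|
    hf.le_right_of_left_le'' trivial trivial (neg_lt_zero.2 hc) ha.le
      (hle (-c) le_rfl (by linarith))
  refine ⟨v + a • d, hmem a (by linarith) le_rfl, by simpa [f] using hfa,
    (ssubset_iff_of_subset (fractionalEntries_add_smul_single_sub_single_subset hij hi hj a)).2 ?_⟩
  rcases min_choice (u - v i) (v j) with hai | haj
  · refine ⟨i, hi, fun hi' => ?_⟩
    have := (mem_fractionalEntries.1 hi').2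
    rw [add_smul_single_sub_single_apply v hij, if_pos rfl, show a = u - v i from hai] at this
    linarith
  · refine ⟨j, hj, fun hj' => ?_⟩
    have := (mem_fractionalEntries.1 hj').1
    rw [add_smul_single_sub_single_apply v hij, if_neg hij.symm, if_pos rfl,
      show a = v j from haj] at this
    linarith

theorem exists_card_fractionalEntries_le_one
    (hconv : ∀ i j : ι, i ≠ j → 2 * H i j ≤ H i i + H j j) (hv : v ∈ cappedSimplex ι u)
    (hmax : IsMaxOn (fun x => x ⬝ᵥ H *ᵥ x) (cappedSimplex ι u) v) :
    ∃ v' ∈ cappedSimplex ι u, v' ⬝ᵥ H *ᵥ v' = v ⬝ᵥ H *ᵥ v ∧ #(fractionalEntries u v') ≤ 1 := by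
  induction hN : #(fractionalEntries u v) using Nat.strong_induction_on generalizing v with
  | _ N ih =>
  by_cases hN1 : N ≤ 1
  · exact ⟨v, hv, rfl, hN ▸ hN1⟩
  obtain ⟨i, hi, j, hj, hij⟩ := one_lt_card.1 (by omega : 1 < #(fractionalEntries u v))
  obtain ⟨v', hv', hQ, hss⟩ := exists_fractionalEntries_ssubset hconv hv hmax hij hi hj
  have hmax' : IsMaxOn (fun x => x ⬝ᵥ H *ᵥ x) (cappedSimplex ι u) v' :=
    isMaxOn_iff.2 fun x hx => hQ ▸ isMaxOn_iff.1 hmax x hx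
  obtain ⟨v'', hv'', hQ', hcard⟩ := ih _ (hN ▸ card_lt_card hss) hv' hmax' rfl
  exact ⟨v'', hv'', hQ'.trans hQ, hcard⟩

end Exchange

end

theorem stmt13_general (n k : ℕ)
    (H : Matrix (Fin n) (Fin n) ℝ)
    (hconv : ∀ i j : Fin n, i ≠ j → 2 * H i j ≤ H i i + H j j)
    (P : Set (Fin n → ℝ))
    (hP : P = {w | (∀ i, w i ∈ Set.Icc (0 : ℝ) (1 / k)) ∧ ∑ i, w i = 1})
    (w : Fin n → ℝ) (hwP : w ∈ P)
    (hmax : ∀ w' ∈ P,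
      dotProduct w' (H.mulVec w') ≤ dotProduct w (H.mulVec w))
    (hcard : ∀ w' ∈ P,
      dotProduct w' (H.mulVec w') = dotProduct w (H.mulVec w) →
      (Finset.univ.filter fun i => w' i = (1 : ℝ) / k).card ≤
        (Finset.univ.filter fun i => w i = (1 : ℝ) / k).card) :
    (Finset.univ.filter fun i => w i = (1 : ℝ) / k).card = k ∧
    ∀ i, w i = (1 : ℝ) / k ∨ w i = 0 := by
  subst hP
  change w ∈ cappedSimplex (Fin n) (1 / k) at hwP
  obtain ⟨v, hv, hvw, hv1⟩ := exists_card_fractionalEntries_le_one hconv hwP (isMaxOn_iff.2 hmax)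
  have hv0 : fractionalEntries (1 / k) v = ∅ :=
    card_eq_zero.1 (by have := card_fractionalEntries_ne_one hv; omega)
  have hkw : k ≤ #{i | w i = 1 / k} :=
    (card_eq_of_fractionalEntries_eq_empty hv hv0).symm.trans_le (hcard v hv hvw)
  have hw0 := fractionalEntries_eq_empty_of_le_card hwP hkw
  exact ⟨card_eq_of_fractionalEntries_eq_empty hwP hw0,
    eq_or_eq_zero_of_fractionalEntries_eq_empty hwP.1 hw0⟩

/-- A maximizer of the quadratic form over the polytope P with the maximal number
of entries equal to 1/k has exactly k entries equal to 1/k and the rest zero. -/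
theorem stmt13 (n k : ℕ) (hk : 1 ≤ k) (hkn : k ≤ n)
    (H : Matrix (Fin n) (Fin n) ℝ) (hsymm : H.IsSymm)
    (hconv : ∀ i j : Fin n, i ≠ j → 2 * H i j ≤ H i i + H j j)
    (P : Set (Fin n → ℝ))
    (hP : P = {w | (∀ i, w i ∈ Set.Icc (0 : ℝ) (1 / k)) ∧ ∑ i, w i = 1})
    (w : Fin n → ℝ) (hwP : w ∈ P)
    (hmax : ∀ w' ∈ P,
      dotProduct w' (H.mulVec w') ≤ dotProduct w (H.mulVec w))
    (hcard : ∀ w' ∈ P,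
      dotProduct w' (H.mulVec w') = dotProduct w (H.mulVec w) →
      (Finset.univ.filter fun i => w' i = (1 : ℝ) / k).card ≤
        (Finset.univ.filter fun i => w i = (1 : ℝ) / k).card) :
    (Finset.univ.filter fun i => w i = (1 : ℝ) / k).card = k ∧
    ∀ i, w i = (1 : ℝ) / k ∨ w i = 0 :=
  stmt13_general n k H hconv P hP w hwP hmax hcard
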